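/- Let (ξ₁,…,ξ_k) be a uniformly random sample without replacement from {1,…,n}, set ζ_i = ξ_i/n, and let g : [0,1] → ℝ be bounded by M. Then for 1 ≤ j ≤ k, |E[(E_{j−1} g(ζ_j))⁴] − (E g(ζ₁))⁴| ≤ C/(n−j+1) for a constant C depending only on M. -/

import Mathlib

open Finset in
/-- Conditional expectation of `F` given the first `j` coordinates of a uniformly random
sample without replacement (an injective tuple) from `{1,…,n}`. -/
noncomputable def condExpSWOR (n k : ℕ) (j : ℕ) (F : (Fin k ↪ Fin n) → ℝ)
    (σ : Fin k ↪ Fin n) : ℝ :=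
  (∑ τ ∈ univ.filter (fun τ : Fin k ↪ Fin n => ∀ i : Fin k, (i : ℕ) < j → τ i = σ i), F τ) /
  ((univ.filter (fun τ : Fin k ↪ Fin n => ∀ i : Fin k, (i : ℕ) < j → τ i = σ i)).card : ℝ)

/-!
Given the first `p = j - 1` draws, the next draw is uniform on the `m = n - p` values not yet
drawn (move fibres along permutations of `{1,…,n}`), so the conditional expectation `D` is the
mean of `g(t/n)` over those values. With `μ` the population mean,
`0 ≤ x⁴ - μ⁴ - 4μ³(x - μ) ≤ 6M²(x - μ)²` on `[-M, M]` and `E[D - μ] = 0`, so the error is at most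
`6M² E[(D - μ)²]`. Finally `m (D - μ)` is minus the sum of the `p` drawn centred values, whose
second moment is `p(n - p)σ²/(n - 1)` for the population variance `σ² ≤ M²` (distinct draws have
covariance `-σ²/(n - 1)`), whence `E[(D - μ)²] ≤ M²/m`.
-/

open Finset

theorem Finset.sum_offDiag_mul {ι R : Type*} [DecidableEq ι] [CommRing R] (s : Finset ι)
    (a : ι → R) :
    ∑ q ∈ s.offDiag, a q.1 * a q.2 = (∑ i ∈ s, a i) ^ 2 - ∑ i ∈ s, a i ^ 2 := by
  rw [sq, sum_mul_sum, ← sum_product', ← diag_union_offDiag, sum_union (disjoint_diag_offDiag _),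
    sum_diag]
  simp only [sq, add_sub_cancel_left]

theorem Finset.sum_sub_sum_div_card {ι : Type*} (s : Finset ι) (f : ι → ℝ) :
    ∑ i ∈ s, (f i - (∑ j ∈ s, f j) / #s) = 0 := by
  rcases s.eq_empty_or_nonempty with rfl | hs
  · simp
  rw [sum_sub_distrib, sum_const, nsmul_eq_mul,
    mul_div_cancel₀ _ (by exact_mod_cast hs.card_pos.ne'), sub_self]

theorem Finset.sum_sub_sum_div_card_sq_le {ι : Type*} (s : Finset ι) (f : ι → ℝ) :
    ∑ i ∈ s, (f i - (∑ j ∈ s, f j) / #s) ^ 2 ≤ ∑ i ∈ s, f i ^ 2 := by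
  rcases s.eq_empty_or_nonempty with rfl | hs
  · simp
  have hcard : (#s : ℝ) ≠ 0 := by exact_mod_cast hs.card_pos.ne'
  have hexpand : ∑ i ∈ s, (f i - (∑ j ∈ s, f j) / #s) ^ 2
      = ∑ i ∈ s, f i ^ 2 - (∑ j ∈ s, f j) ^ 2 / #s := by
    simp only [sub_sq, sum_add_distrib, sum_sub_distrib, sum_const, nsmul_eq_mul, ← sum_mul,
      ← mul_sum]
    field_simp
    ring
  rw [hexpand]
  exact sub_le_self _ (by positivity)

theorem Finset.abs_sum_div_card_le {ι : Type*} {s : Finset ι} (hs : s.Nonempty) {f : ι → ℝ}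
    {M : ℝ} (hf : ∀ i ∈ s, |f i| ≤ M) : |(∑ i ∈ s, f i) / #s| ≤ M := by
  have hcard : (0 : ℝ) < #s := by exact_mod_cast hs.card_pos
  rw [abs_div, Nat.abs_cast, div_le_iff₀ hcard]
  calc |∑ i ∈ s, f i| ≤ ∑ i ∈ s, |f i| := abs_sum_le_sum_abs _ _
    _ ≤ #s • M := sum_le_card_nsmul _ _ _ hf
    _ = M * #s := by rw [nsmul_eq_mul, mul_comm]

theorem abs_pow_four_sub_pow_four_sub_mul_sub_le {x μ M : ℝ} (hx : |x| ≤ M) (hμ : |μ| ≤ M) :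
    |x ^ 4 - μ ^ 4 - 4 * μ ^ 3 * (x - μ)| ≤ 6 * M ^ 2 * (x - μ) ^ 2 := by
  have hxμ : |x + μ| ≤ 2 * M := (abs_add_le x μ).trans (by linarith)
  have hcoeff : 2 * μ ^ 2 + (x + μ) ^ 2 ≤ 6 * M ^ 2 := by
    nlinarith [sq_le_sq' (abs_le.mp hμ).1 (abs_le.mp hμ).2,
      sq_le_sq' (abs_le.mp hxμ).1 (abs_le.mp hxμ).2]
  rw [show x ^ 4 - μ ^ 4 - 4 * μ ^ 3 * (x - μ) = (2 * μ ^ 2 + (x + μ) ^ 2) * (x - μ) ^ 2 by ring,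
    abs_of_nonneg (by positivity)]
  exact mul_le_mul_of_nonneg_right hcoeff (sq_nonneg _)

theorem Finset.abs_sum_pow_four_sub_card_mul_le {ι : Type*} (s : Finset ι) {D : ι → ℝ}
    {μ M : ℝ} (hD : ∀ i ∈ s, |D i| ≤ M) (hμ : |μ| ≤ M) (hmean : ∑ i ∈ s, (D i - μ) = 0) :
    |∑ i ∈ s, D i ^ 4 - #s * μ ^ 4| ≤ 6 * M ^ 2 * ∑ i ∈ s, (D i - μ) ^ 2 := by
  have hlinear : ∑ i ∈ s, D i ^ 4 - #s * μ ^ 4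
      = ∑ i ∈ s, (D i ^ 4 - μ ^ 4 - 4 * μ ^ 3 * (D i - μ)) := by
    rw [sum_sub_distrib, sum_sub_distrib, ← mul_sum, hmean, sum_const, nsmul_eq_mul]
    ring
  rw [hlinear, mul_sum]
  exact (abs_sum_le_sum_abs _ _).trans
    (sum_le_sum fun i hi => abs_pow_four_sub_pow_four_sub_mul_sub_le (hD i hi) hμ)

theorem Finset.card_mul_sum_comp_eq_of_exists_smul {G X Y : Type*} [Group G] [MulAction G X]
    [DecidableEq Y] {s : Finset X} {T : Finset Y} {φ : X → Y} (hφ : ∀ x ∈ s, φ x ∈ T)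
    (htrans : ∀ y ∈ T, ∀ y' ∈ T, ∃ g : G, ∀ x ∈ s, φ x = y → g • x ∈ s ∧ φ (g • x) = y')
    (f : Y → ℝ) :
    (#T : ℝ) * ∑ x ∈ s, f (φ x) = #s * ∑ y ∈ T, f y := by
  have hle : ∀ y ∈ T, ∀ y' ∈ T, #{x ∈ s | φ x = y} ≤ #{x ∈ s | φ x = y'} := by
    intro y hy y' hy'
    obtain ⟨g, hg⟩ := htrans y hy y' hy'
    refine card_le_card_of_injOn (g • ·) (fun x hx => ?_) (MulAction.injective g).injOn
    rw [mem_coe, mem_filter] at hx ⊢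
    exact hg x hx.1 hx.2
  rcases T.eq_empty_or_nonempty with rfl | ⟨y₀, hy₀⟩
  · rw [eq_empty_of_forall_notMem fun x hx => notMem_empty _ (hφ x hx)]
    simp
  set c := #{x ∈ s | φ x = y₀}
  have hfiber : ∀ y ∈ T, #{x ∈ s | φ x = y} = c := fun y hy =>
    (hle y hy y₀ hy₀).antisymm (hle y₀ hy₀ y hy)
  have hsum : ∑ x ∈ s, f (φ x) = c * ∑ y ∈ T, f y := by
    rw [← sum_fiberwise_of_maps_to hφ, mul_sum]
    refine sum_congr rfl fun y hy => ?_
    rw [sum_congr rfl fun x hx => by rw [(mem_filter.mp hx).2], sum_const, nsmul_eq_mul,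
      hfiber y hy]
  rw [hsum, card_eq_sum_card_fiberwise hφ, sum_congr rfl hfiber, sum_const, smul_eq_mul]
  push_cast
  ring

theorem Equiv.Perm.exists_apply_eq_and_apply_eq {α : Type*} [DecidableEq α] {a b c d : α}
    (hab : a ≠ b) (hcd : c ≠ d) : ∃ π : Equiv.Perm α, π a = c ∧ π b = d := by
  have hc : c ≠ Equiv.swap a c b := fun h => hab <| (Equiv.swap a c).injective <| by
    rw [← h, Equiv.swap_apply_left]
  exact ⟨Equiv.swap (Equiv.swap a c b) d * Equiv.swap a c, by
    simp [Equiv.swap_apply_of_ne_of_ne hc hcd], by simp⟩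

namespace Function.Embedding

variable {n k : ℕ}

theorem card_mul_sum_apply (i : Fin k) (f : Fin n → ℝ) :
    (n : ℝ) * ∑ σ : Fin k ↪ Fin n, f (σ i) = Fintype.card (Fin k ↪ Fin n) * ∑ t, f t := by
  have := card_mul_sum_comp_eq_of_exists_smul (G := Equiv.Perm (Fin n)) (s := univ) (T := univ)
    (φ := fun σ : Fin k ↪ Fin n => σ i) (fun _ _ => mem_univ _)
    (fun t _ t' _ => ⟨Equiv.swap t t', fun σ _ hσ => ⟨mem_univ _, by
      simp [Function.Embedding.smul_apply, Equiv.Perm.smul_def, hσ]⟩⟩) f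
  simpa using this

theorem mul_sum_apply_mul_apply {i i' : Fin k} (hi : i ≠ i') (f : Fin n → ℝ) :
    (n * (n - 1) : ℝ) * ∑ σ : Fin k ↪ Fin n, f (σ i) * f (σ i')
      = Fintype.card (Fin k ↪ Fin n) * ∑ q ∈ (univ : Finset (Fin n)).offDiag, f q.1 * f q.2 := by
  have := card_mul_sum_comp_eq_of_exists_smul (G := Equiv.Perm (Fin n)) (s := univ)
    (T := univ.offDiag) (φ := fun σ : Fin k ↪ Fin n => (σ i, σ i'))
    (fun σ _ => by simpa using σ.injective.ne hi)
    (fun q hq q' hq' => by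
      obtain ⟨π, h₁, h₂⟩ := Equiv.Perm.exists_apply_eq_and_apply_eq (mem_offDiag.mp hq).2.2
        (mem_offDiag.mp hq').2.2
      refine ⟨π, fun σ _ hσ => ⟨mem_univ _, ?_⟩⟩
      simp only [Prod.ext_iff] at hσ
      simp [Function.Embedding.smul_apply, Equiv.Perm.smul_def, hσ, h₁, h₂])
    (fun q => f q.1 * f q.2)
  rw [offDiag_card, card_univ, Fintype.card_fin, Nat.cast_sub (Nat.le_mul_self n), card_univ]
    at this
  rw [← this]
  push_cast
  ring

theorem mul_sum_sq_sum_apply (P : Finset (Fin k)) {a : Fin n → ℝ}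
    (ha : ∑ t, a t = 0) :
    (n * (n - 1) : ℝ) * ∑ σ : Fin k ↪ Fin n, (∑ i ∈ P, a (σ i)) ^ 2
      = Fintype.card (Fin k ↪ Fin n) * #P * (n - #P) * ∑ t, a t ^ 2 := by
  have hsq : ∀ σ : Fin k ↪ Fin n, (∑ i ∈ P, a (σ i)) ^ 2
      = ∑ i ∈ P, a (σ i) ^ 2 + ∑ q ∈ P.offDiag, a (σ q.1) * a (σ q.2) := by
    intro σ
    rw [sum_offDiag_mul P (fun i => a (σ i))]
    ring
  have hdiag : ∀ i ∈ P, (n : ℝ) * ∑ σ : Fin k ↪ Fin n, a (σ i) ^ 2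
      = Fintype.card (Fin k ↪ Fin n) * ∑ t, a t ^ 2 :=
    fun i _ => card_mul_sum_apply i (a · ^ 2)
  have hoff : ∀ q ∈ P.offDiag, (n * (n - 1) : ℝ) * ∑ σ : Fin k ↪ Fin n, a (σ q.1) * a (σ q.2)
      = -(Fintype.card (Fin k ↪ Fin n) * ∑ t, a t ^ 2) := by
    intro q hq
    rw [mul_sum_apply_mul_apply (mem_offDiag.mp hq).2.2, sum_offDiag_mul, ha]
    ring
  calc (n * (n - 1) : ℝ) * ∑ σ : Fin k ↪ Fin n, (∑ i ∈ P, a (σ i)) ^ 2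
      = (n - 1) * ∑ i ∈ P, (n : ℝ) * ∑ σ : Fin k ↪ Fin n, a (σ i) ^ 2
        + ∑ q ∈ P.offDiag, (n * (n - 1) : ℝ) * ∑ σ : Fin k ↪ Fin n, a (σ q.1) * a (σ q.2) := by
        rw [sum_congr rfl fun σ _ => hsq σ, sum_add_distrib, sum_comm, sum_comm (s := univ)]
        simp only [← mul_sum]
        ring
    _ = Fintype.card (Fin k ↪ Fin n) * #P * (n - #P) * ∑ t, a t ^ 2 := by
        rw [sum_congr rfl hdiag, sum_congr rfl hoff, sum_const, sum_const, nsmul_eq_mul,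
          nsmul_eq_mul, offDiag_card, Nat.cast_sub (Nat.le_mul_self _)]
        push_cast
        ring

end Function.Embedding

section UnsampledMean

variable {n k : ℕ}

noncomputable def unsampledMean (P : Finset (Fin k)) (f : Fin n → ℝ) (σ : Fin k ↪ Fin n) : ℝ :=
  (∑ t ∈ (P.map σ)ᶜ, f t) / (n - #P)

theorem condExpSWOR_apply_eq (j : Fin k) (f : Fin n → ℝ) (σ : Fin k ↪ Fin n) :
    condExpSWOR n k j (fun τ => f (τ j)) σ = unsampledMean (Iio j) f σ := by
  set B := univ.filter fun τ : Fin k ↪ Fin n => ∀ i : Fin k, (i : ℕ) < j → τ i = σ i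
  have hmaps : ∀ τ ∈ B, τ j ∈ ((Iio j).map σ)ᶜ := by
    intro τ hτ
    simp only [mem_compl, mem_map, mem_Iio, not_exists, not_and]
    intro i hi hσi
    rw [← (mem_filter.mp hτ).2 i hi] at hσi
    exact hi.ne (τ.injective hσi)
  have hswap : ∀ t ∈ ((Iio j).map σ)ᶜ, ∀ t' ∈ ((Iio j).map σ)ᶜ,
      ∃ π : Equiv.Perm (Fin n), ∀ τ ∈ B, τ j = t → π • τ ∈ B ∧ (π • τ) j = t' := by
    intro t ht t' ht'
    refine ⟨Equiv.swap t t', fun τ hτ hτt => ⟨?_, by simp [Function.Embedding.smul_apply, hτt]⟩⟩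
    simp only [B, mem_filter, mem_univ, true_and] at hτ ⊢
    intro i hi
    have hσi : σ i ∈ (Iio j).map σ := mem_map_of_mem σ (mem_Iio.mpr hi)
    rw [Function.Embedding.smul_apply, Equiv.Perm.smul_def, hτ i hi,
      Equiv.swap_apply_of_ne_of_ne (fun h => mem_compl.mp ht (by rwa [← h]))
        (fun h => mem_compl.mp ht' (by rwa [← h]))]
  have key := card_mul_sum_comp_eq_of_exists_smul hmaps hswap f
  have hB : (#B : ℝ) ≠ 0 := by
    exact_mod_cast (card_pos.mpr ⟨σ, by simp [B]⟩).ne'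
  have hT : (#((Iio j).map σ)ᶜ : ℝ) = n - j := by
    have hjn : (j : ℕ) ≤ n := j.isLt.le.trans (by simpa using Fintype.card_le_of_embedding σ)
    rw [card_compl, card_map, Fin.card_Iio, Fintype.card_fin, Nat.cast_sub hjn]
  have hT0 : (#((Iio j).map σ)ᶜ : ℝ) ≠ 0 := by
    exact_mod_cast (card_pos.mpr ⟨σ j, hmaps σ (by simp [B])⟩).ne'
  rw [condExpSWOR, unsampledMean, Fin.card_Iio, ← hT, div_eq_div_iff hB hT0, mul_comm, key,
    mul_comm]

variable {P : Finset (Fin k)} {f : Fin n → ℝ}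

theorem unsampledMean_sub_mean (hP : #P < n) (σ : Fin k ↪ Fin n) :
    unsampledMean P f σ - (∑ t, f t) / n
      = -(∑ i ∈ P, (f (σ i) - (∑ t, f t) / n)) / (n - #P) := by
  have hn : (n : ℝ) ≠ 0 := by exact_mod_cast (Nat.zero_le _ |>.trans_lt hP).ne'
  have hm : (n - #P : ℝ) ≠ 0 := sub_ne_zero.mpr (by exact_mod_cast hP.ne')
  have hsplit := sum_compl_add_sum (P.map σ) f
  rw [sum_map] at hsplit
  rw [unsampledMean, ← hsplit, sum_sub_distrib, sum_const, nsmul_eq_mul]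
  field_simp
  ring

theorem abs_unsampledMean_le (hP : #P < n) {M : ℝ} (hf : ∀ t, |f t| ≤ M) (σ : Fin k ↪ Fin n) :
    |unsampledMean P f σ| ≤ M := by
  have hcard : #(P.map σ)ᶜ = n - #P := by
    rw [card_compl, card_map, Fintype.card_fin]
  have hne : ((P.map σ)ᶜ).Nonempty := card_pos.mp (by omega)
  have := abs_sum_div_card_le hne fun t _ => hf t
  rwa [hcard, Nat.cast_sub hP.le] at this

theorem sum_unsampledMean_sub_mean (hP : #P < n) :
    ∑ σ : Fin k ↪ Fin n, (unsampledMean P f σ - (∑ t, f t) / n) = 0 := by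
  have hn : (n : ℝ) ≠ 0 := by exact_mod_cast (Nat.zero_le _ |>.trans_lt hP).ne'
  have hcentered : ∀ i, ∑ σ : Fin k ↪ Fin n, (f (σ i) - (∑ t, f t) / n) = 0 := by
    intro i
    have h := Function.Embedding.card_mul_sum_apply i (fun t => f t - (∑ t, f t) / n)
    rw [show ∑ t, (f t - (∑ t, f t) / n) = 0 by simpa using sum_sub_sum_div_card univ f,
      mul_zero] at h
    exact (mul_eq_zero.mp h).resolve_left hn
  simp only [unsampledMean_sub_mean hP, neg_div, sum_neg_distrib, ← sum_div]
  rw [sum_comm, sum_congr rfl fun i _ => hcentered i, sum_const_zero, zero_div, neg_zero]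

theorem sum_sq_unsampledMean_sub_mean_le (hP : #P < n) {M : ℝ} (hf : ∀ t, |f t| ≤ M) :
    ∑ σ : Fin k ↪ Fin n, (unsampledMean P f σ - (∑ t, f t) / n) ^ 2
      ≤ Fintype.card (Fin k ↪ Fin n) * M ^ 2 / (n - #P) := by
  set a : Fin n → ℝ := fun t => f t - (∑ t, f t) / n
  have hm : (0 : ℝ) < n - #P := sub_pos.mpr (by exact_mod_cast hP)
  have hvar : ∑ t, a t ^ 2 ≤ n * M ^ 2 := by
    calc ∑ t, a t ^ 2 ≤ ∑ t, f t ^ 2 := by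
          simpa using sum_sub_sum_div_card_sq_le univ f
      _ ≤ ∑ _t : Fin n, M ^ 2 := sum_le_sum fun t _ => sq_le_sq' (abs_le.mp (hf t)).1
          (abs_le.mp (hf t)).2
      _ = n * M ^ 2 := by simp
  have hsecond : ∑ σ : Fin k ↪ Fin n, (∑ i ∈ P, a (σ i)) ^ 2
      ≤ Fintype.card (Fin k ↪ Fin n) * (n - #P) * M ^ 2 := by
    rcases P.eq_empty_or_nonempty with rfl | hPne
    · simp only [sum_empty, ne_eq, OfNat.ofNat_ne_zero, not_false_eq_true, zero_pow,
        sum_const_zero, card_empty, Nat.cast_zero, sub_zero]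
      positivity
    have hp : (1 : ℝ) ≤ #P := by exact_mod_cast hPne.card_pos
    have hpn : (#P : ℝ) ≤ n - 1 := by
      rw [le_sub_iff_add_le]; exact_mod_cast hP
    have hidentity := Function.Embedding.mul_sum_sq_sum_apply P (a := a) (by
      have := sum_sub_sum_div_card univ f
      rwa [card_univ, Fintype.card_fin] at this)
    refine le_of_mul_le_mul_left (a := (n * (n - 1) : ℝ)) ?_ (by nlinarith)
    rw [hidentity]
    have hT : 0 ≤ ∑ t, a t ^ 2 := sum_nonneg fun t _ => sq_nonneg _
    have hN : (0 : ℝ) ≤ Fintype.card (Fin k ↪ Fin n) := Nat.cast_nonneg _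
    calc (Fintype.card (Fin k ↪ Fin n) : ℝ) * #P * (n - #P) * ∑ t, a t ^ 2
        ≤ Fintype.card (Fin k ↪ Fin n) * (n - 1) * (n - #P) * (n * M ^ 2) := by
          gcongr
          exact mul_nonneg (mul_nonneg hN (by linarith)) hm.le
      _ = _ := by ring
  simp only [unsampledMean_sub_mean hP, div_pow, neg_sq, ← sum_div]
  rw [div_le_div_iff₀ (by positivity) hm]
  nlinarith [hsecond]

theorem abs_sum_unsampledMean_pow_four_div_sub_le (hk : k ≤ n) (hP : #P < n) {M : ℝ}
    (hf : ∀ t, |f t| ≤ M) :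
    |(∑ σ : Fin k ↪ Fin n, unsampledMean P f σ ^ 4) / Fintype.card (Fin k ↪ Fin n)
      - ((∑ t, f t) / n) ^ 4| ≤ 6 * M ^ 4 / (n - #P) := by
  have hN : (0 : ℝ) < Fintype.card (Fin k ↪ Fin n) := by
    exact_mod_cast Fintype.card_pos_iff.mpr ⟨Fin.castLEEmb hk⟩
  have hm : (0 : ℝ) < n - #P := sub_pos.mpr (by exact_mod_cast hP)
  have hmean : |(∑ t, f t) / n| ≤ M := by
    simpa using abs_sum_div_card_le ⟨⟨0, (Nat.zero_le _).trans_lt hP⟩, mem_univ _⟩ fun t _ => hf t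
  have h := abs_sum_pow_four_sub_card_mul_le univ (fun σ _ => abs_unsampledMean_le hP hf σ)
    hmean (sum_unsampledMean_sub_mean hP)
  rw [card_univ] at h
  rw [div_sub' hN.ne', abs_div, abs_of_pos hN, div_le_div_iff₀ hN hm]
  have hvar := sum_sq_unsampledMean_sub_mean_le hP hf
  rw [le_div_iff₀ hm] at hvar
  calc _ ≤ 6 * M ^ 2 * ((∑ σ : Fin k ↪ Fin n, (unsampledMean P f σ - (∑ t, f t) / n) ^ 2)
        * (n - #P)) := by
        rw [← mul_assoc]
        exact mul_le_mul_of_nonneg_right h hm.le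
    _ ≤ 6 * M ^ 2 * (Fintype.card (Fin k ↪ Fin n) * M ^ 2) := by gcongr
    _ = 6 * M ^ 4 * Fintype.card (Fin k ↪ Fin n) := by ring

end UnsampledMean

theorem stmt10 (M : ℝ) : ∃ C : ℝ, ∀ (n k j : ℕ) (hn : 0 < n) (hk : k ≤ n)
    (hj : 1 ≤ j) (hjk : j ≤ k), ∀ g : ℝ → ℝ, (∀ x, |g x| ≤ M) →
    |(∑ σ : Fin k ↪ Fin n,
        (condExpSWOR n k (j - 1)
          (fun τ => g ((((τ ⟨j - 1, by omega⟩ : Fin n) : ℕ) + 1 : ℝ) / n)) σ) ^ 4) /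
        (Fintype.card (Fin k ↪ Fin n) : ℝ)
      - ((∑ t : Fin n, g (((t : ℕ) + 1 : ℝ) / n)) / n) ^ 4|
      ≤ C / ((n : ℝ) - j + 1) := by
  refine ⟨6 * M ^ 4, fun n k j _ hk hj hjk g hg => ?_⟩
  set i : Fin k := ⟨j - 1, by omega⟩
  have hden : (n : ℝ) - j + 1 = n - #(Iio i) := by
    rw [Fin.card_Iio, Nat.cast_sub hj]
    ring
  have key := abs_sum_unsampledMean_pow_four_div_sub_le (P := Iio i)
    (f := fun t => g (((t : ℕ) + 1 : ℝ) / n)) hk (by rw [Fin.card_Iio]; omega) fun t => hg _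
  simp only [← condExpSWOR_apply_eq] at key
  rwa [hden]
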